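/- arXiv:1905.01318 — 3 statements merged into one kernel-verified Lean document; each statement's English description precedes it below -/
import Mathlib

section
/- Let Λ be a programmable processor map given in Kraus form and let χ_E be a fixed positive semidefinite d'×d' complex matrix. Then the infidelity cost function C_F(π) := 1 − F(π)², where F(π) := Tr √(√χ_E · Λ(π) · √χ_E), is convex on the set of density matrices: for all density matrices π₀, π₁ and all p ∈ [0,1], C_F(p·π₀ + (1−p)·π₁) ≤ p·C_F(π₀) + (1−p)·C_F(π₁). -/
open Matrix BigOperators
open scoped ComplexOrder Classical

/-- Junk-valued positive semidefinite square root: for a positive semidefinite matrix it is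
the PSD square root, otherwise it is `0`. -/
noncomputable def msqrt {n : Type*} [Fintype n] [DecidableEq n]
    (M : Matrix n n ℂ) : Matrix n n ℂ :=
  if h : M.PosSemidef then
    (h.1.eigenvectorUnitary : Matrix n n ℂ) * diagonal ((↑) ∘ (√·) ∘ h.1.eigenvalues) *
      (star h.1.eigenvectorUnitary : Matrix n n ℂ) else 0

/-- The programmable processor map in Kraus form `Λ(π) = ∑ k, A k * π * (A k)ᴴ`. -/
noncomputable def krausMap {d d' K : ℕ} (A : Fin K → Matrix (Fin d') (Fin d) ℂ)
    (π : Matrix (Fin d) (Fin d) ℂ) : Matrix (Fin d') (Fin d') ℂ :=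
  ∑ k, A k * π * (A k)ᴴ

/-- The fidelity `F(π) = Tr √(√χ_E · Λ(π) · √χ_E)` between the target Choi matrix `χ_E` and
the simulated Choi matrix `Λ(π)`. -/
noncomputable def fidelity {d d' K : ℕ} (A : Fin K → Matrix (Fin d') (Fin d) ℂ)
    (χE : Matrix (Fin d') (Fin d') ℂ) (π : Matrix (Fin d) (Fin d) ℂ) : ℝ :=
  (msqrt (msqrt χE * krausMap A π * msqrt χE)).trace.re

/-!
With `S = √χ_E` we have `F(π)² = f(S Λ(π) S)` for `f(M) = (Tr √M)²`, and `π ↦ S Λ(π) S` is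
linear and preserves positivity, so it suffices that `f` is concave on positive matrices. As `f` is
positively homogeneous of degree one, concavity reduces to superadditivity. For positive `M₀, M₁`
and `c₀, c₁ ≥ 0` with `c₀² + c₁² = 1`, the identity
`(c₀ a + c₁ b)² + (c₁ a - c₀ b)² = a² + b²` for `a = √M₀`, `b = √M₁` gives
`(c₀ a + c₁ b)² ≤ M₀ + M₁`, and operator monotonicity of the square root turns this into
`c₀ √M₀ + c₁ √M₁ ≤ √(M₀ + M₁)`. Taking traces and choosing `(c₀, c₁)` proportional to
`(Tr √M₀, Tr √M₁)` gives `f(M₀) + f(M₁) ≤ f(M₀ + M₁)`.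
-/

open scoped MatrixOrder

theorem sq_smul_add_smul_add_sq_smul_sub_smul {A : Type*} [Ring A] [Algebra ℝ A] (a b : A)
    (c₀ c₁ : ℝ) :
    (c₀ • a + c₁ • b) ^ 2 + (c₁ • a - c₀ • b) ^ 2 = (c₀ ^ 2 + c₁ ^ 2) • (a ^ 2 + b ^ 2) := by
  simp only [sq, add_mul, mul_add, sub_mul, mul_sub, smul_mul_smul_comm]
  module

theorem Real.sq_add_sq_le_sq_of_forall_mul_add_mul_le {x y z : ℝ} (hx : 0 ≤ x) (hy : 0 ≤ y)
    (h : ∀ c₀ c₁ : ℝ, 0 ≤ c₀ → 0 ≤ c₁ → c₀ ^ 2 + c₁ ^ 2 = 1 → c₀ * x + c₁ * y ≤ z) :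
    x ^ 2 + y ^ 2 ≤ z ^ 2 := by
  obtain ⟨R, hR, hRsq⟩ : ∃ R : ℝ, 0 ≤ R ∧ R ^ 2 = x ^ 2 + y ^ 2 :=
    ⟨_, Real.sqrt_nonneg _, Real.sq_sqrt (by positivity)⟩
  rw [← hRsq]
  obtain rfl | hR := hR.eq_or_lt
  · simpa using sq_nonneg z
  have hle : R ≤ z := by
    convert h (x / R) (y / R) (by positivity) (by positivity) (by field_simp; linarith) using 1
    field_simp
    linarith
  exact pow_le_pow_left₀ hR.le hle 2

namespace CFC

variable {A : Type*} [CStarAlgebra A] [PartialOrder A] [StarOrderedRing A]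

theorem sqrt_smul {a : A} (ha : 0 ≤ a) {c : ℝ} (hc : 0 ≤ c) :
    sqrt (c • a) = √c • sqrt a := by
  refine sqrt_unique ?_ (smul_nonneg (Real.sqrt_nonneg c) (sqrt_nonneg a))
  rw [smul_mul_smul_comm, Real.mul_self_sqrt hc, sqrt_mul_sqrt_self a]

theorem smul_add_smul_le_sqrt_sq_add_sq {a b : A} (ha : 0 ≤ a) (hb : 0 ≤ b) {c₀ c₁ : ℝ}
    (hc₀ : 0 ≤ c₀) (hc₁ : 0 ≤ c₁) (hc : c₀ ^ 2 + c₁ ^ 2 = 1) :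
    c₀ • a + c₁ • b ≤ sqrt (a ^ 2 + b ^ 2) := by
  have hsq : (c₀ • a + c₁ • b) ^ 2 ≤ a ^ 2 + b ^ 2 := by
    rw [← one_smul ℝ (a ^ 2 + b ^ 2), ← hc, ← sq_smul_add_smul_add_sq_smul_sub_smul]
    exact le_add_of_nonneg_right (IsSelfAdjoint.sq_nonneg (by cfc_tac))
  calc c₀ • a + c₁ • b
      = sqrt ((c₀ • a + c₁ • b) ^ 2) :=
        (sqrt_sq _ (add_nonneg (smul_nonneg hc₀ ha) (smul_nonneg hc₁ hb))).symm
    _ ≤ sqrt (a ^ 2 + b ^ 2) := sqrt_le_sqrt _ _ hsq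

end CFC

namespace Matrix

variable {n : Type*} [Fintype n] [DecidableEq n]

-- Both sides vanish off the positive semidefinite cone.
theorem msqrt_eq_cfcSqrt (M : Matrix n n ℂ) : msqrt M = CFC.sqrt M := by
  by_cases hM : M.PosSemidef
  · rw [msqrt, dif_pos hM, CFC.sqrt_eq_cfc, cfc_nnreal_eq_real _ M hM.nonneg, hM.1.cfc_eq,
      IsHermitian.cfc, Unitary.conjStarAlgAut_apply]
    congr 3
    ext i
    simp [max_eq_left (hM.eigenvalues_nonneg i)]
  · rw [msqrt, dif_neg hM, CFC.sqrt_of_not_nonneg (mt LE.le.posSemidef hM)]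

omit [DecidableEq n] in
theorem re_trace_le_re_trace {M N : Matrix n n ℂ} (h : M ≤ N) : M.trace.re ≤ N.trace.re := by
  have := (le_iff.mp h).trace_nonneg
  rw [trace_sub] at this
  simpa using (Complex.nonneg_iff.mp this).1

theorem re_trace_sqrt_nonneg (M : Matrix n n ℂ) : 0 ≤ (CFC.sqrt M).trace.re := by
  simpa using re_trace_le_re_trace (CFC.sqrt_nonneg M)

open scoped Matrix.Norms.L2Operator in
theorem mul_re_trace_sqrt_add_mul_le {M₀ M₁ : Matrix n n ℂ} (h₀ : 0 ≤ M₀) (h₁ : 0 ≤ M₁)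
    {c₀ c₁ : ℝ} (hc₀ : 0 ≤ c₀) (hc₁ : 0 ≤ c₁) (hc : c₀ ^ 2 + c₁ ^ 2 = 1) :
    c₀ * (CFC.sqrt M₀).trace.re + c₁ * (CFC.sqrt M₁).trace.re ≤
      (CFC.sqrt (M₀ + M₁)).trace.re := by
  have h := CFC.smul_add_smul_le_sqrt_sq_add_sq (CFC.sqrt_nonneg M₀) (CFC.sqrt_nonneg M₁)
    hc₀ hc₁ hc
  rw [CFC.sq_sqrt M₀, CFC.sq_sqrt M₁] at h
  simpa using re_trace_le_re_trace h

theorem sq_re_trace_sqrt_add_sq_le {M₀ M₁ : Matrix n n ℂ} (h₀ : 0 ≤ M₀) (h₁ : 0 ≤ M₁) :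
    (CFC.sqrt M₀).trace.re ^ 2 + (CFC.sqrt M₁).trace.re ^ 2 ≤
      (CFC.sqrt (M₀ + M₁)).trace.re ^ 2 :=
  Real.sq_add_sq_le_sq_of_forall_mul_add_mul_le (re_trace_sqrt_nonneg M₀)
    (re_trace_sqrt_nonneg M₁) fun _ _ hc₀ hc₁ hc => mul_re_trace_sqrt_add_mul_le h₀ h₁ hc₀ hc₁ hc

open scoped Matrix.Norms.L2Operator in
theorem sq_re_trace_sqrt_smul {M : Matrix n n ℂ} (hM : 0 ≤ M) {c : ℝ} (hc : 0 ≤ c) :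
    (CFC.sqrt (c • M)).trace.re ^ 2 = c * (CFC.sqrt M).trace.re ^ 2 := by
  rw [CFC.sqrt_smul hM hc, trace_smul, Complex.real_smul, Complex.re_ofReal_mul, mul_pow,
    Real.sq_sqrt hc]

theorem concaveOn_sq_re_trace_sqrt :
    ConcaveOn ℝ {M : Matrix n n ℂ | 0 ≤ M} fun M => (CFC.sqrt M).trace.re ^ 2 := by
  refine ⟨convex_Ici 0, fun M₀ h₀ M₁ h₁ a b ha hb _ => ?_⟩
  calc a • (CFC.sqrt M₀).trace.re ^ 2 + b • (CFC.sqrt M₁).trace.re ^ 2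
      = (CFC.sqrt (a • M₀)).trace.re ^ 2 + (CFC.sqrt (b • M₁)).trace.re ^ 2 := by
        rw [sq_re_trace_sqrt_smul h₀ ha, sq_re_trace_sqrt_smul h₁ hb, smul_eq_mul, smul_eq_mul]
    _ ≤ (CFC.sqrt (a • M₀ + b • M₁)).trace.re ^ 2 :=
        sq_re_trace_sqrt_add_sq_le (smul_nonneg ha h₀) (smul_nonneg hb h₁)

end Matrix

section Processor

variable {d d' K : ℕ} (A : Fin K → Matrix (Fin d') (Fin d) ℂ)

theorem krausMap_posSemidef {π : Matrix (Fin d) (Fin d) ℂ} (hπ : π.PosSemidef) :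
    (krausMap A π).PosSemidef :=
  posSemidef_sum _ fun k _ => hπ.mul_mul_conjTranspose_same (A k)

noncomputable def conjKrausMap (S : Matrix (Fin d') (Fin d') ℂ) :
    Matrix (Fin d) (Fin d) ℂ →ₗ[ℝ] Matrix (Fin d') (Fin d') ℂ where
  toFun π := S * krausMap A π * S
  map_add' π σ := by
    simp only [krausMap, Matrix.mul_add, Matrix.add_mul, Finset.sum_add_distrib]
  map_smul' c π := by
    simp only [krausMap, ← Finset.smul_sum, Matrix.mul_smul, Matrix.smul_mul, RingHom.id_apply]

theorem concaveOn_sq_fidelity (χE : Matrix (Fin d') (Fin d') ℂ) :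
    ConcaveOn ℝ {π : Matrix (Fin d) (Fin d) ℂ | 0 ≤ π} fun π => fidelity A χE π ^ 2 := by
  have hS : (msqrt χE)ᴴ = msqrt χE := by
    rw [msqrt_eq_cfcSqrt]
    exact (CFC.sqrt_nonneg χE).posSemidef.1
  have hmaps : {π : Matrix (Fin d) (Fin d) ℂ | 0 ≤ π} ⊆
      conjKrausMap A (msqrt χE) ⁻¹' {M | 0 ≤ M} := fun π hπ => by
    have := (krausMap_posSemidef A hπ.posSemidef).conjTranspose_mul_mul_same (msqrt χE)
    rw [hS] at this
    exact this.nonneg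
  have hfid : (fun π => fidelity A χE π ^ 2) =
      (fun M => (CFC.sqrt M).trace.re ^ 2) ∘ conjKrausMap A (msqrt χE) := by
    funext π
    rw [Function.comp_apply, fidelity, msqrt_eq_cfcSqrt (_ * _ * _)]
    rfl
  rw [hfid]
  exact (concaveOn_sq_re_trace_sqrt.comp_linearMap _).subset hmaps (convex_Ici 0)

end Processor

theorem infidelityCost_convex_general {d d' K : ℕ}
    (A : Fin K → Matrix (Fin d') (Fin d) ℂ)
    (χE : Matrix (Fin d') (Fin d') ℂ)
    (π₀ π₁ : Matrix (Fin d) (Fin d) ℂ)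
    (hπ₀ : π₀.PosSemidef)
    (hπ₁ : π₁.PosSemidef)
    (p : ℝ) (hp₀ : 0 ≤ p) (hp₁ : p ≤ 1) :
    1 - (fidelity A χE ((p : ℂ) • π₀ + ((1 - p : ℝ) : ℂ) • π₁)) ^ 2 ≤
      p * (1 - (fidelity A χE π₀) ^ 2) + (1 - p) * (1 - (fidelity A χE π₁) ^ 2) := by
  have h := (concaveOn_sq_fidelity A χE).2 hπ₀.nonneg hπ₁.nonneg hp₀ (sub_nonneg.2 hp₁)
    (add_sub_cancel p 1)
  rw [smul_eq_mul, smul_eq_mul, ← Complex.coe_smul, ← Complex.coe_smul] at h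
  linarith

/-- The infidelity cost `C_F(π) = 1 − F(π)²` is convex on density matrices. -/
theorem infidelityCost_convex {d d' K : ℕ}
    (A : Fin K → Matrix (Fin d') (Fin d) ℂ)
    (hA : ∑ k, (A k)ᴴ * A k = 1)
    (χE : Matrix (Fin d') (Fin d') ℂ) (hχ : χE.PosSemidef)
    (π₀ π₁ : Matrix (Fin d) (Fin d) ℂ)
    (hπ₀ : π₀.PosSemidef) (hπ₀t : π₀.trace = 1)
    (hπ₁ : π₁.PosSemidef) (hπ₁t : π₁.trace = 1)
    (p : ℝ) (hp₀ : 0 ≤ p) (hp₁ : p ≤ 1) :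
    1 - (fidelity A χE ((p : ℂ) • π₀ + ((1 - p : ℝ) : ℂ) • π₁)) ^ 2 ≤
      p * (1 - (fidelity A χE π₀) ^ 2) + (1 - p) * (1 - (fidelity A χE π₁) ^ 2) :=
  infidelityCost_convex_general A χE π₀ π₁ hπ₀ hπ₁ p hp₀ hp₁
end

section
/- Let A and B be positive semidefinite complex d×d matrices and let M be a complex (d·m)×(d·m) matrix. Then ‖(√A ⊗ I_m) · M · (√B ⊗ I_m)‖₁ ≤ √(Tr A · Tr B) · ‖M‖₁, where √A, √B are the positive semidefinite square roots, ⊗ is the Kronecker product, and I_m is the m×m identity matrix. -/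
open Matrix BigOperators Kronecker
open scoped ComplexOrder Classical

/-- The trace norm `‖M‖₁ = Tr √(Mᴴ M)` of a square complex matrix. -/
noncomputable def traceNorm {n : Type*} [Fintype n] [DecidableEq n]
    (M : Matrix n n ℂ) : ℝ :=
  (msqrt (Mᴴ * M)).trace.re

/-!
Write `X = √A ⊗ I` and `Y = √B ⊗ I`, and measure them in the operator norm. A polar decomposition
`K = U |K|` of `K = X M Y` with `‖U‖ ≤ 1` gives `‖K‖₁ = Re Tr (Uᴴ K) = Re Tr (C M)` with
`C = Y Uᴴ X`. Hölder's inequality `|Tr (C M)| ≤ ‖C‖ ‖M‖₁` follows from a polar decomposition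
`M = V |M|` and Cauchy–Schwarz for the Hilbert–Schmidt inner product applied to `|M|^{1/2}` and
`C V |M|^{1/2}`. Hence `‖X M Y‖₁ ≤ ‖X‖ ‖Y‖ ‖M‖₁`, and `‖X‖² = ‖A ⊗ I‖ ≤ Tr A` since `A ≤ (Tr A) I`.
-/

open scoped MatrixOrder Matrix.Norms.L2Operator

namespace Matrix

theorem sub_kronecker {l m n p α : Type*} [NonUnitalNonAssocRing α] (A B : Matrix l m α)
    (C : Matrix n p α) : (A - B) ⊗ₖ C = A ⊗ₖ C - B ⊗ₖ C := by
  ext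
  simp [sub_mul]

section Trace

variable {n : Type*} [Fintype n]

lemma PosSemidef.re_trace_nonneg {A : Matrix n n ℂ} (hA : A.PosSemidef) : 0 ≤ A.trace.re :=
  (Complex.nonneg_iff.mp hA.trace_nonneg).1

lemma re_trace_mono {A B : Matrix n n ℂ} (h : A ≤ B) : A.trace.re ≤ B.trace.re :=
  (Complex.le_def.mp (OrderHomClass.mono (tracePositiveLinearMap n ℂ ℂ) h)).1

end Trace

variable {n : Type*} [Fintype n] [DecidableEq n]

-- The real spectrum of a matrix is finite, so every function is continuous on it.
lemma cfc_mul_cfc (A : Matrix n n ℂ) (f g : ℝ → ℝ) :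
    cfc f A * cfc g A = cfc (fun x => f x * g x) A :=
  (cfc_mul f g A (A.finite_real_spectrum.continuousOn f)
    (A.finite_real_spectrum.continuousOn g)).symm

-- `U = N |N|⁺`, where `|N|⁺ = cfc (·⁻¹) |N|` is a pseudo-inverse because `0⁻¹ = 0`.
theorem exists_polar_decomposition (N : Matrix n n ℂ) :
    ∃ U : Matrix n n ℂ, U * CFC.abs N = N ∧ Uᴴ * N = CFC.abs N ∧ ‖U‖ ≤ 1 := by
  set S := CFC.abs N
  have hS : Sᴴ = S := (CFC.abs_nonneg N).isSelfAdjoint.star_eq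
  have hSS : S * S = Nᴴ * N := CFC.abs_mul_abs N
  have hSid : cfc (fun x : ℝ => x) S = S := cfc_id' ℝ S
  set T := cfc (·⁻¹ : ℝ → ℝ) S
  have hT : Tᴴ = T := (cfc_predicate _ S : IsSelfAdjoint T).star_eq
  have hTSS : T * S * S = S := by
    rw [← hSid, cfc_mul_cfc, cfc_mul_cfc]
    simp only [inv_mul_mul_self]
  have hSTS : S * T * S = S := by
    rw [← hSid, cfc_mul_cfc, cfc_mul_cfc]
    simp only [mul_inv_mul_cancel]
  have hTSST : ‖T * S * S * T‖ ≤ 1 := by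
    rw [← hSid, cfc_mul_cfc, cfc_mul_cfc, cfc_mul_cfc]
    refine norm_cfc_le zero_le_one fun x _ => ?_
    rcases eq_or_ne x 0 with rfl | hx <;> simp [*]
  refine ⟨N * T, ?_, ?_, ?_⟩
  · have h : (N - N * T * S)ᴴ * (N - N * T * S) = 0 := by
      rw [conjTranspose_sub, conjTranspose_mul, conjTranspose_mul, hT, hS,
        show (Nᴴ - S * (T * Nᴴ)) * (N - N * T * S) = (1 - S * T) * (Nᴴ * N) * (1 - T * S) by
          noncomm_ring, ← hSS,
        show (1 - S * T) * (S * S) * (1 - T * S) = (S - S * T * S) * (S - S * T * S) by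
          noncomm_ring, hSTS, sub_self, zero_mul]
    exact (sub_eq_zero.mp (conjTranspose_mul_self_eq_zero.mp h)).symm
  · rw [conjTranspose_mul, hT, mul_assoc, ← hSS, ← mul_assoc, hTSS]
  · have h : ‖N * T‖ * ‖N * T‖ ≤ 1 := by
      rw [← CStarRing.norm_star_mul_self, star_eq_conjTranspose, conjTranspose_mul, hT,
        show T * Nᴴ * (N * T) = T * (Nᴴ * N) * T by noncomm_ring, ← hSS, ← mul_assoc]
      exact hTSST
    nlinarith [norm_nonneg (N * T)]

-- Cauchy–Schwarz in the GNS space of the trace.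
theorem norm_trace_conjTranspose_mul_le (A B : Matrix n n ℂ) :
    ‖(Aᴴ * B).trace‖ ≤ √(Aᴴ * A).trace.re * √(Bᴴ * B).trace.re :=
  let f := tracePositiveLinearMap n ℂ ℂ
  norm_inner_le_norm (𝕜 := ℂ) (f.toPreGNS A) (f.toPreGNS B)

theorem re_trace_conjTranspose_mul_self_mul_le (W R : Matrix n n ℂ) :
    ((W * R)ᴴ * (W * R)).trace.re ≤ ‖W‖ ^ 2 * (Rᴴ * R).trace.re := by
  have h := star_left_conjugate_le_conjugate
    (CStarAlgebra.star_mul_le_algebraMap_norm_sq (a := W)) R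
  rw [Algebra.algebraMap_eq_smul_one, mul_smul_comm, mul_one, smul_mul_assoc] at h
  simpa only [trace_smul, Complex.smul_re, smul_eq_mul, star_eq_conjTranspose, conjTranspose_mul,
    mul_assoc] using re_trace_mono h

theorem PosSemidef.le_algebraMap_re_trace {A : Matrix n n ℂ} (hA : A.PosSemidef) :
    A ≤ algebraMap ℝ _ A.trace.re := by
  refine le_algebraMap_of_spectrum_le fun x hx => ?_
  obtain ⟨i, rfl⟩ := hA.1.spectrum_real_eq_range_eigenvalues ▸ hx
  rw [hA.1.trace_eq_sum_eigenvalues, Complex.re_sum]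
  simpa using Finset.single_le_sum (fun j _ => hA.eigenvalues_nonneg j) (Finset.mem_univ i)

theorem norm_sqrt_kronecker_one_le {m : Type*} [Fintype m] [DecidableEq m] {A : Matrix n n ℂ}
    (hA : A.PosSemidef) : ‖CFC.sqrt A ⊗ₖ (1 : Matrix m m ℂ)‖ ≤ √A.trace.re := by
  set X := CFC.sqrt A ⊗ₖ (1 : Matrix m m ℂ)
  have hXX : Xᴴ * X = A ⊗ₖ 1 := by
    rw [conjTranspose_kronecker, conjTranspose_one,
      show (CFC.sqrt A)ᴴ = CFC.sqrt A from (CFC.sqrt_nonneg A).isSelfAdjoint.star_eq,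
      ← mul_kronecker_mul, CFC.sqrt_mul_sqrt_self A hA.nonneg, one_mul]
  have hle : Xᴴ * X ≤ algebraMap ℝ _ A.trace.re := by
    have hsub : algebraMap ℝ _ A.trace.re - A ⊗ₖ (1 : Matrix m m ℂ) =
        (algebraMap ℝ _ A.trace.re - A) ⊗ₖ 1 := by
      simp only [sub_kronecker, Algebra.algebraMap_eq_smul_one, smul_kronecker, one_kronecker_one]
    rw [hXX, le_iff, hsub]
    exact (le_iff.mp hA.le_algebraMap_re_trace).kronecker PosSemidef.one
  have h := (CStarAlgebra.norm_le_iff_le_algebraMap _ hA.re_trace_nonneg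
    (posSemidef_conjTranspose_mul_self X).nonneg).mpr hle
  rw [← star_eq_conjTranspose, CStarRing.norm_star_mul_self, ← sq] at h
  exact Real.le_sqrt_of_sq_le h

end Matrix

variable {n : Type*} [Fintype n] [DecidableEq n]

theorem msqrt_eq_sqrt {A : Matrix n n ℂ} (hA : A.PosSemidef) : msqrt A = CFC.sqrt A := by
  rw [CFC.sqrt_eq_real_sqrt A hA.nonneg, cfcₙ_eq_cfc, hA.1.cfc_eq, msqrt, dif_pos hA]
  rfl

theorem traceNorm_eq_re_trace_abs (M : Matrix n n ℂ) : traceNorm M = (CFC.abs M).trace.re := by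
  rw [traceNorm, CFC.abs, msqrt_eq_sqrt (posSemidef_conjTranspose_mul_self M)]
  rfl

lemma traceNorm_nonneg (M : Matrix n n ℂ) : 0 ≤ traceNorm M := by
  rw [traceNorm_eq_re_trace_abs]
  exact (nonneg_iff_posSemidef.mp (CFC.abs_nonneg M)).re_trace_nonneg

theorem norm_trace_mul_le_norm_mul_traceNorm (C M : Matrix n n ℂ) :
    ‖(C * M).trace‖ ≤ ‖C‖ * traceNorm M := by
  obtain ⟨U, hUM, -, hU⟩ := exists_polar_decomposition M
  set R := CFC.sqrt (CFC.abs M)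
  have hR : Rᴴ = R := (CFC.sqrt_nonneg _).isSelfAdjoint.star_eq
  have hRR : Rᴴ * R = CFC.abs M := by
    rw [hR]
    exact CFC.sqrt_mul_sqrt_self _ (CFC.abs_nonneg M)
  have htr : (C * M).trace = (Rᴴ * (C * U * R)).trace := by
    rw [← hUM, ← hRR, hR, trace_mul_comm R]
    simp only [mul_assoc]
  have hM : traceNorm M = (Rᴴ * R).trace.re := by rw [hRR, traceNorm_eq_re_trace_abs]
  calc ‖(C * M).trace‖ = ‖(Rᴴ * (C * U * R)).trace‖ := by rw [htr]
    _ ≤ √(Rᴴ * R).trace.re * √((C * U * R)ᴴ * (C * U * R)).trace.re :=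
      norm_trace_conjTranspose_mul_le _ _
    _ ≤ √(Rᴴ * R).trace.re * √(‖C * U‖ ^ 2 * (Rᴴ * R).trace.re) := by
      gcongr
      exact re_trace_conjTranspose_mul_self_mul_le _ _
    _ = ‖C * U‖ * traceNorm M := by
      rw [Real.sqrt_mul (sq_nonneg _), Real.sqrt_sq (norm_nonneg _), hM, mul_left_comm,
        Real.mul_self_sqrt (hM ▸ traceNorm_nonneg M)]
    _ ≤ ‖C‖ * traceNorm M := by
      gcongr
      · exact traceNorm_nonneg M
      · exact (norm_mul_le C U).trans (mul_le_of_le_one_right (norm_nonneg C) hU)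

theorem traceNorm_mul_mul_le (X M Y : Matrix n n ℂ) :
    traceNorm (X * M * Y) ≤ ‖X‖ * ‖Y‖ * traceNorm M := by
  obtain ⟨U, -, hUK, hU⟩ := exists_polar_decomposition (X * M * Y)
  have hU' : ‖Uᴴ‖ ≤ 1 := by rwa [← star_eq_conjTranspose, norm_star]
  calc traceNorm (X * M * Y) = (Uᴴ * (X * M * Y)).trace.re := by
        rw [hUK, traceNorm_eq_re_trace_abs]
    _ = ((Y * Uᴴ * X) * M).trace.re := by
        rw [← mul_assoc, trace_mul_comm]
        simp only [mul_assoc]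
    _ ≤ ‖((Y * Uᴴ * X) * M).trace‖ := Complex.re_le_norm _
    _ ≤ ‖Y * Uᴴ * X‖ * traceNorm M := norm_trace_mul_le_norm_mul_traceNorm _ _
    _ ≤ ‖X‖ * ‖Y‖ * traceNorm M := by
        gcongr
        · exact traceNorm_nonneg M
        · calc ‖Y * Uᴴ * X‖ ≤ ‖Y‖ * ‖Uᴴ‖ * ‖X‖ := norm_mul₃_le
            _ ≤ ‖Y‖ * 1 * ‖X‖ := by gcongr
            _ = ‖X‖ * ‖Y‖ := by ring

/-- `‖(√A ⊗ I) M (√B ⊗ I)‖₁ ≤ √(Tr A · Tr B) ‖M‖₁` for positive semidefinite `A`, `B`. -/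
theorem traceNorm_sqrt_kronecker_mul {d m : ℕ}
    (A B : Matrix (Fin d) (Fin d) ℂ) (hA : A.PosSemidef) (hB : B.PosSemidef)
    (M : Matrix (Fin d × Fin m) (Fin d × Fin m) ℂ) :
    traceNorm ((msqrt A ⊗ₖ (1 : Matrix (Fin m) (Fin m) ℂ)) * M *
        (msqrt B ⊗ₖ (1 : Matrix (Fin m) (Fin m) ℂ))) ≤
      Real.sqrt (A.trace.re * B.trace.re) * traceNorm M := by
  rw [msqrt_eq_sqrt hA, msqrt_eq_sqrt hB, Real.sqrt_mul hA.re_trace_nonneg]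
  refine (traceNorm_mul_mul_le _ M _).trans ?_
  gcongr
  · exact traceNorm_nonneg M
  · exact norm_sqrt_kronecker_one_le hA
  · exact norm_sqrt_kronecker_one_le hB
end

section
/- Let X be a Hermitian d×d complex matrix and let μ > 0. Then Tr[h_μ(X)] is the greatest element of the set { Tr[Y·X] − (μ/2)·Tr[Y²] : Y Hermitian d×d with −I ≼ Y ≼ I }, and the maximum is attained at Y = h'_μ(X) (which satisfies −I ≼ h'_μ(X) ≼ I). In other words, the smooth trace norm t_μ(X) := max_{‖Y‖_∞ ≤ 1} ( ⟨Y,X⟩ − (μ/2)‖Y‖₂² ) over Hermitian Y equals Tr[h_μ(X)], with maximizer h'_μ(X). -/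
open Matrix BigOperators
open scoped ComplexOrder Classical

/-- The Huber penalty function `h_μ`. -/
noncomputable def huber (μ x : ℝ) : ℝ :=
  if |x| < μ then x ^ 2 / (2 * μ) else |x| - μ / 2

/-- The derivative `h'_μ` of the Huber penalty function. -/
noncomputable def huberDeriv (μ x : ℝ) : ℝ :=
  if |x| < μ then x / μ else Real.sign x

/-- Junk-valued matrix Huber function: for a Hermitian matrix it applies `h_μ` to the
eigenvalues through the spectral decomposition, otherwise it is `0`. -/
noncomputable def mhuber {n : Type*} [Fintype n] [DecidableEq n]
    (μ : ℝ) (M : Matrix n n ℂ) : Matrix n n ℂ :=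
  if h : M.IsHermitian then
    (h.eigenvectorUnitary : Matrix n n ℂ) *
      Matrix.diagonal (fun i => (huber μ (h.eigenvalues i) : ℂ)) *
      (h.eigenvectorUnitary : Matrix n n ℂ)ᴴ
  else 0

/-- Junk-valued matrix version of `h'_μ` via the spectral decomposition. -/
noncomputable def mhuberDeriv {n : Type*} [Fintype n] [DecidableEq n]
    (μ : ℝ) (M : Matrix n n ℂ) : Matrix n n ℂ :=
  if h : M.IsHermitian then
    (h.eigenvectorUnitary : Matrix n n ℂ) *
      Matrix.diagonal (fun i => (huberDeriv μ (h.eigenvalues i) : ℂ)) *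
      (h.eigenvectorUnitary : Matrix n n ℂ)ᴴ
  else 0

/-!
Diagonalise `X = U diag(λ) U*`. Conjugation by `U` preserves the objective
`Tr[Y X] − (μ/2) Tr[Y²]` and the constraint `−I ≼ Y ≼ I`, so we may take `X` diagonal. Then
`Tr[Y X] = ∑ z_i λ_i` for the real diagonal `z` of `Y`, `z_i ∈ [−1, 1]` by the constraint, and
`Tr[Y²] ≥ ∑ z_i²`; so the objective is at most `∑ (z_i λ_i − (μ/2) z_i²)`. Each summand is at
most `h_μ(λ_i)`, since `h_μ(x) = max_{|y| ≤ 1} (y x − (μ/2) y²)` with maximiser `y = h'_μ(x)`,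
and `Y = h'_μ(X)` attains the bound.
-/

open RCLike Unitary

lemma abs_huberDeriv_le_one (μ x : ℝ) : |huberDeriv μ x| ≤ 1 := by
  unfold huberDeriv
  split_ifs with h
  · have hμ : 0 < μ := (abs_nonneg x).trans_lt h
    rw [abs_div, abs_of_pos hμ]
    exact div_le_one_of_le₀ h.le hμ.le
  · rcases Real.sign_apply_eq x with hs | hs | hs <;> simp [hs]

lemma mul_sub_sq_le_huber {μ y : ℝ} (x : ℝ) (hy : |y| ≤ 1) :
    y * x - μ / 2 * y ^ 2 ≤ huber μ x := by
  unfold huber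
  rw [abs_le] at hy
  split_ifs with h
  · rw [le_div_iff₀ (by linarith [abs_nonneg x])]
    nlinarith [sq_nonneg (μ * y - x)]
  · rw [not_lt] at h
    have h₁ : 0 ≤ 1 - y := by linarith
    have h₂ : 0 ≤ 1 + y := by linarith
    rcases abs_cases x with ⟨he, _⟩ | ⟨he, _⟩ <;> rw [he] at h ⊢ <;>
      rcases le_total 0 μ with hμ | hμ <;>
      nlinarith [mul_nonneg h₁ h₂, mul_nonneg h₁ h₁, mul_nonneg h₂ h₂]

lemma huberDeriv_mul_sub_sq {μ : ℝ} (hμ : 0 < μ) (x : ℝ) :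
    huberDeriv μ x * x - μ / 2 * huberDeriv μ x ^ 2 = huber μ x := by
  unfold huber huberDeriv
  split_ifs with h
  · field_simp; ring
  · rcases lt_trichotomy x 0 with hx | rfl | hx
    · rw [Real.sign_of_neg hx, abs_of_neg hx]; ring
    · rw [abs_zero] at h; linarith
    · rw [Real.sign_of_pos hx, abs_of_pos hx]; ring

section

variable {𝕜 : Type*} [RCLike 𝕜] {n : Type*}

lemma Matrix.IsHermitian.sum_re_diag_sq_le [Fintype n] {Z : Matrix n n 𝕜} (hZ : Z.IsHermitian) :
    ∑ i, re (Z i i) ^ 2 ≤ re (Z * Z).trace := by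
  rw [trace, map_sum]
  refine Finset.sum_le_sum fun i _ => ?_
  have hrow : re ((Z * Z) i i) = ∑ j, ‖Z i j‖ ^ 2 := by
    simp only [mul_apply, map_sum]
    refine Finset.sum_congr rfl fun j _ => ?_
    rw [← hZ.apply j i, star_def, mul_conj, ← ofReal_pow, ofReal_re]
  calc re (Z i i) ^ 2 ≤ ‖Z i i‖ ^ 2 :=
        sq_le_sq' (abs_le.mp (abs_re_le_norm _)).1 (abs_le.mp (abs_re_le_norm _)).2
    _ ≤ ∑ j, ‖Z i j‖ ^ 2 :=
        Finset.single_le_sum (f := fun j => ‖Z i j‖ ^ 2) (fun j _ => by positivity)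
          (Finset.mem_univ i)
    _ = re ((Z * Z) i i) := hrow.symm

variable [DecidableEq n]

lemma Matrix.abs_re_diag_le_one {Z : Matrix n n 𝕜} (h₁ : (1 - Z).PosSemidef)
    (h₂ : (1 + Z).PosSemidef) (i : n) : |re (Z i i)| ≤ 1 := by
  have hle₁ := (RCLike.nonneg_iff.mp (h₁.diag_nonneg (i := i))).1
  have hle₂ := (RCLike.nonneg_iff.mp (h₂.diag_nonneg (i := i))).1
  simp only [sub_apply, add_apply, one_apply_eq, map_sub, map_add, one_re] at hle₁ hle₂
  exact abs_le.mpr ⟨by linarith, by linarith⟩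

lemma Matrix.isHermitian_diagonal_ofReal (f : n → ℝ) :
    (diagonal fun i => (f i : 𝕜)).IsHermitian :=
  isHermitian_diagonal_iff.mpr fun i => conj_ofReal (f i)

lemma Matrix.posSemidef_one_sub_diagonal_ofReal {f : n → ℝ} (hf : ∀ i, f i ≤ 1) :
    (1 - diagonal fun i => (f i : 𝕜)).PosSemidef := by
  rw [← diagonal_one, diagonal_sub, posSemidef_diagonal_iff]
  intro i
  rw [← ofReal_one, ← ofReal_sub, ofReal_nonneg, sub_nonneg]
  exact hf i

lemma Matrix.posSemidef_one_add_diagonal_ofReal {f : n → ℝ} (hf : ∀ i, -1 ≤ f i) :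
    (1 + diagonal fun i => (f i : 𝕜)).PosSemidef := by
  rw [← diagonal_one, diagonal_add, posSemidef_diagonal_iff]
  intro i
  rw [← ofReal_one, ← ofReal_add, ofReal_nonneg, ← neg_le_iff_add_nonneg']
  exact hf i

variable [Fintype n]

lemma Matrix.trace_conjStarAlgAut (U : unitary (Matrix n n 𝕜)) (A : Matrix n n 𝕜) :
    (conjStarAlgAut 𝕜 _ U A).trace = A.trace := by
  rw [conjStarAlgAut_apply, trace_mul_cycle, coe_star_mul_self, one_mul]

lemma Matrix.PosSemidef.conjStarAlgAut {A : Matrix n n 𝕜} (hA : A.PosSemidef)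
    (U : unitary (Matrix n n 𝕜)) : (conjStarAlgAut 𝕜 _ U A).PosSemidef :=
  hA.mul_mul_conjTranspose_same (U : Matrix n n 𝕜)

lemma Matrix.IsHermitian.conjStarAlgAut {A : Matrix n n 𝕜} (hA : A.IsHermitian)
    (U : unitary (Matrix n n 𝕜)) : (conjStarAlgAut 𝕜 _ U A).IsHermitian :=
  isHermitian_mul_mul_conjTranspose (U : Matrix n n 𝕜) hA

lemma Matrix.re_trace_mul_diagonal (Z : Matrix n n 𝕜) (f : n → ℝ) :
    re (Z * diagonal fun i => (f i : 𝕜)).trace = ∑ i, re (Z i i) * f i := by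
  simp [trace, mul_diagonal, map_sum]

/-- `⟨Y, X⟩ − (μ/2)‖Y‖₂²`, the function maximised in the smooth trace norm `t_μ(X)`. -/
noncomputable def smoothTraceObjective (μ : ℝ) (X Y : Matrix n n 𝕜) : ℝ :=
  re (Y * X).trace - μ / 2 * re (Y * Y).trace

lemma smoothTraceObjective_conjStarAlgAut (μ : ℝ) (U : unitary (Matrix n n 𝕜))
    (X Y : Matrix n n 𝕜) :
    smoothTraceObjective μ (conjStarAlgAut 𝕜 _ U X) (conjStarAlgAut 𝕜 _ U Y) =
      smoothTraceObjective μ X Y := by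
  simp only [smoothTraceObjective, ← map_mul, Matrix.trace_conjStarAlgAut]

lemma smoothTraceObjective_diagonal (μ : ℝ) (f g : n → ℝ) :
    smoothTraceObjective μ (diagonal fun i => (f i : 𝕜)) (diagonal fun i => (g i : 𝕜)) =
      ∑ i, (g i * f i - μ / 2 * g i ^ 2) := by
  simp only [smoothTraceObjective, Matrix.re_trace_mul_diagonal, diagonal_apply_eq, ofReal_re,
    Finset.sum_sub_distrib, Finset.mul_sum, sq]

lemma smoothTraceObjective_diagonal_le_sum_huber {μ : ℝ} (hμ : 0 ≤ μ) (f : n → ℝ)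
    {Z : Matrix n n 𝕜} (hZ : Z.IsHermitian) (h₁ : (1 - Z).PosSemidef)
    (h₂ : (1 + Z).PosSemidef) :
    smoothTraceObjective μ (diagonal fun i => (f i : 𝕜)) Z ≤ ∑ i, huber μ (f i) :=
  calc smoothTraceObjective μ (diagonal fun i => (f i : 𝕜)) Z
      ≤ ∑ i, re (Z i i) * f i - μ / 2 * ∑ i, re (Z i i) ^ 2 := by
        rw [smoothTraceObjective, Matrix.re_trace_mul_diagonal]
        gcongr
        exact hZ.sum_re_diag_sq_le
    _ = ∑ i, (re (Z i i) * f i - μ / 2 * re (Z i i) ^ 2) := by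
        rw [Finset.mul_sum, Finset.sum_sub_distrib]
    _ ≤ ∑ i, huber μ (f i) :=
        Finset.sum_le_sum fun i _ => mul_sub_sq_le_huber _ (Matrix.abs_re_diag_le_one h₁ h₂ i)

lemma smoothTraceObjective_le_sum_huber {μ : ℝ} (hμ : 0 ≤ μ) {X Y : Matrix n n 𝕜}
    (hX : X.IsHermitian) (hY : Y.IsHermitian) (h₁ : (1 - Y).PosSemidef)
    (h₂ : (1 + Y).PosSemidef) :
    smoothTraceObjective μ X Y ≤ ∑ i, huber μ (hX.eigenvalues i) := by
  set U := hX.eigenvectorUnitary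
  set Z := conjStarAlgAut 𝕜 _ (star U) Y
  have hYZ : Y = conjStarAlgAut 𝕜 _ U Z := by
    rw [← conjStarAlgAut_mul_apply, mul_star_self, map_one, StarAlgEquiv.one_apply]
  have hZ₁ : (1 - Z).PosSemidef := by simpa only [map_sub, map_one] using h₁.conjStarAlgAut (star U)
  have hZ₂ : (1 + Z).PosSemidef := by simpa only [map_add, map_one] using h₂.conjStarAlgAut (star U)
  calc smoothTraceObjective μ X Y
      = smoothTraceObjective μ (conjStarAlgAut 𝕜 _ U (diagonal fun i => (hX.eigenvalues i : 𝕜)))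
          (conjStarAlgAut 𝕜 _ U Z) := congrArg₂ _ hX.spectral_theorem hYZ
    _ ≤ ∑ i, huber μ (hX.eigenvalues i) := by
      rw [smoothTraceObjective_conjStarAlgAut]
      exact smoothTraceObjective_diagonal_le_sum_huber hμ _ (hY.conjStarAlgAut _) hZ₁ hZ₂

end

section

variable {n : Type*} [Fintype n] [DecidableEq n] {X : Matrix n n ℂ}

lemma mhuber_eq (μ : ℝ) (hX : X.IsHermitian) :
    mhuber μ X = conjStarAlgAut ℂ _ hX.eigenvectorUnitary
      (diagonal fun i => (huber μ (hX.eigenvalues i) : ℂ)) :=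
  dif_pos hX

lemma mhuberDeriv_eq (μ : ℝ) (hX : X.IsHermitian) :
    mhuberDeriv μ X = conjStarAlgAut ℂ _ hX.eigenvectorUnitary
      (diagonal fun i => (huberDeriv μ (hX.eigenvalues i) : ℂ)) :=
  dif_pos hX

lemma re_trace_mhuber (μ : ℝ) (hX : X.IsHermitian) :
    (mhuber μ X).trace.re = ∑ i, huber μ (hX.eigenvalues i) := by
  rw [mhuber_eq μ hX, trace_conjStarAlgAut, trace_diagonal, ← Complex.ofReal_sum,
    Complex.ofReal_re]

lemma isHermitian_mhuberDeriv (μ : ℝ) (hX : X.IsHermitian) : (mhuberDeriv μ X).IsHermitian := by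
  rw [mhuberDeriv_eq μ hX]
  exact (isHermitian_diagonal_ofReal _).conjStarAlgAut _

lemma posSemidef_one_sub_mhuberDeriv (μ : ℝ) (hX : X.IsHermitian) :
    (1 - mhuberDeriv μ X).PosSemidef := by
  rw [mhuberDeriv_eq μ hX, ← map_one (conjStarAlgAut ℂ _ hX.eigenvectorUnitary), ← map_sub]
  exact (posSemidef_one_sub_diagonal_ofReal fun i =>
      (abs_le.mp (abs_huberDeriv_le_one μ (hX.eigenvalues i))).2).conjStarAlgAut
      hX.eigenvectorUnitary

lemma posSemidef_one_add_mhuberDeriv (μ : ℝ) (hX : X.IsHermitian) :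
    (1 + mhuberDeriv μ X).PosSemidef := by
  rw [mhuberDeriv_eq μ hX, ← map_one (conjStarAlgAut ℂ _ hX.eigenvectorUnitary), ← map_add]
  exact (posSemidef_one_add_diagonal_ofReal fun i =>
      (abs_le.mp (abs_huberDeriv_le_one μ (hX.eigenvalues i))).1).conjStarAlgAut
      hX.eigenvectorUnitary

lemma smoothTraceObjective_mhuberDeriv {μ : ℝ} (hμ : 0 < μ) (hX : X.IsHermitian) :
    smoothTraceObjective μ X (mhuberDeriv μ X) = (mhuber μ X).trace.re :=
  calc smoothTraceObjective μ X (mhuberDeriv μ X)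
      = smoothTraceObjective μ
          (conjStarAlgAut ℂ _ hX.eigenvectorUnitary (diagonal fun i => (hX.eigenvalues i : ℂ)))
          (conjStarAlgAut ℂ _ hX.eigenvectorUnitary
            (diagonal fun i => (huberDeriv μ (hX.eigenvalues i) : ℂ))) :=
        congrArg₂ _ hX.spectral_theorem (mhuberDeriv_eq μ hX)
    _ = ∑ i, (huberDeriv μ (hX.eigenvalues i) * hX.eigenvalues i -
          μ / 2 * huberDeriv μ (hX.eigenvalues i) ^ 2) := by
        rw [smoothTraceObjective_conjStarAlgAut]
        exact smoothTraceObjective_diagonal μ _ _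
    _ = (mhuber μ X).trace.re := by
        rw [re_trace_mhuber μ hX]
        exact Finset.sum_congr rfl fun i _ => huberDeriv_mul_sub_sq hμ _

end

/-- `Tr[h_μ(X)]` is the greatest value of `Tr[Y X] − (μ/2) Tr[Y²]` over Hermitian `Y` with
`−I ≼ Y ≼ I`, and the maximum is attained at `Y = h'_μ(X)`. -/
theorem smoothTraceNorm_isGreatest {d : ℕ}
    (X : Matrix (Fin d) (Fin d) ℂ) (hX : X.IsHermitian)
    (μ : ℝ) (hμ : 0 < μ) :
    IsGreatest
      {r : ℝ | ∃ Y : Matrix (Fin d) (Fin d) ℂ, Y.IsHermitian ∧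
        (1 - Y).PosSemidef ∧ (1 + Y).PosSemidef ∧
        r = (Y * X).trace.re - μ / 2 * (Y * Y).trace.re}
      ((mhuber μ X).trace.re) ∧
    (1 - mhuberDeriv μ X).PosSemidef ∧ (1 + mhuberDeriv μ X).PosSemidef ∧
    (mhuberDeriv μ X * X).trace.re - μ / 2 * (mhuberDeriv μ X * mhuberDeriv μ X).trace.re =
      (mhuber μ X).trace.re := by
  have hD₁ := posSemidef_one_sub_mhuberDeriv μ hX
  have hD₂ := posSemidef_one_add_mhuberDeriv μ hX
  have hmax := smoothTraceObjective_mhuberDeriv hμ hX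
  refine ⟨⟨⟨_, isHermitian_mhuberDeriv μ hX, hD₁, hD₂, hmax.symm⟩, ?_⟩, hD₁, hD₂, hmax⟩
  rintro _ ⟨Y, hY, hY₁, hY₂, rfl⟩
  rw [re_trace_mhuber μ hX]
  exact smoothTraceObjective_le_sum_huber hμ.le hX hY hY₁ hY₂
end
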